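/- arXiv:1809.10550 — 2 statements merged into one kernel-verified Lean document; each statement's English description precedes it below -/
import Mathlib

section
/- (Jordan criterion) A homogeneous element f of degree n of the free Zinbiel algebra Zin(X) (a linear combination of words of length n) is a Jordan element (f ∈ J(X)) if and only if D(f) = n!·f. Moreover, the canonical homomorphism from the free non-unital commutative associative K-algebra on X (polynomials in X with zero constant term) onto J(X), sending the monomial x_{i_1}⋯x_{i_n} to {{⋯{x_{i_1},x_{i_2}}⋯},x_{i_n}}, is an isomorphism. -/
/-- Nonempty words in the alphabet `X`. -/
def Word (X : Type) : Type := {l : List X // l ≠ []}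

/-- The underlying vector space of the free Zinbiel algebra on `X` over `K`:
the space with basis the nonempty words in `X`. -/
abbrev Zin (K X : Type) [Field K] : Type := Word X →₀ K

/-- All shuffles (interleavings) of two words. -/
def shuffles {X : Type} : List X → List X → List (List X)
  | [], l => [l]
  | a :: as, [] => [a :: as]
  | a :: as, b :: bs =>
      ((shuffles as (b :: bs)).map fun w => a :: w) ++
        ((shuffles (a :: as) bs).map fun w => b :: w)
  termination_by l₁ l₂ => l₁.length + l₂.length

/-- The basis vector of `Zin K X` corresponding to a word (`0` for the empty word). -/
noncomputable def ofList {K X : Type} [Field K] : List X → Zin K X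
  | [] => 0
  | a :: t => Finsupp.single ⟨a :: t, by simp⟩ 1

/-- Sum of the basis vectors of a list of words. -/
noncomputable def ofLists {K X : Type} [Field K] (ls : List (List X)) : Zin K X :=
  (ls.map (ofList (K := K))).sum

/-- The letter `x` as an element of `Zin K X`. -/
noncomputable def ofLetter {K X : Type} [Field K] (x : X) : Zin K X :=
  Finsupp.single ⟨[x], by simp⟩ 1

/-- The Zinbiel product on `Zin K X`, defined on basis words by
`u ∘ (v ++ [y]) = (u ⧢ v) ++ [y]` and extended bilinearly. -/
noncomputable def zmul {K X : Type} [Field K] (f g : Zin K X) : Zin K X :=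
  f.sum fun u cu => g.sum fun w cw =>
    (cu * cw) • ofLists ((shuffles u.1 w.1.dropLast).map fun s => s ++ [w.1.getLast w.2])

/-- The shuffle product on `Zin K X`, extended bilinearly from words. -/
noncomputable def shMul {K X : Type} [Field K] (f g : Zin K X) : Zin K X :=
  f.sum fun u cu => g.sum fun w cw => (cu * cw) • ofLists (shuffles u.1 w.1)

/-- The commutator `[f,g] = f∘g - g∘f` in `Zin K X`. -/
noncomputable def zbracket {K X : Type} [Field K] (f g : Zin K X) : Zin K X :=
  zmul f g - zmul g f

/-- The anticommutator `{f,g} = f∘g + g∘f` in `Zin K X`. -/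
noncomputable def jprod {K X : Type} [Field K] (f g : Zin K X) : Zin K X :=
  zmul f g + zmul g f

/-- Swap the last two letters of a word (identity on shorter words). -/
def swapLast {X : Type} (l : List X) : List X :=
  match l.reverse with
  | z :: y :: t => (y :: z :: t).reverse
  | _ => l

/-- The linear map `p : Zin(X) → Zin(X)`: `p(x) = -x` on letters, and `p` swaps
the last two letters of a word of length ≥ 2. -/
noncomputable def pMap {K X : Type} [Field K] (f : Zin K X) : Zin K X :=
  f.sum fun w c =>
    c • (if w.1.length = 1 then -(Finsupp.single w (1 : K)) else ofList (swapLast w.1))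

/-- `bar f = f - p(f)`. -/
noncomputable def bar {K X : Type} [Field K] (f : Zin K X) : Zin K X := f - pMap f

/-- The skew element `\bar{w} = w - p(w)` associated to a word `w`. -/
noncomputable def skew {K X : Type} [Field K] (w : Word X) : Zin K X :=
  bar (Finsupp.single w 1)

/-- Membership in `ST(X)`, the subalgebra of `(Zin(X), [·,·])` generated by the
letters: the free special Tortkara algebra on `X`. -/
inductive InST {K X : Type} [Field K] : Zin K X → Prop
  | letter (x : X) : InST (ofLetter x)
  | zero : InST 0
  | add {f g : Zin K X} : InST f → InST g → InST (f + g)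
  | smul (c : K) {f : Zin K X} : InST f → InST (c • f)
  | bracket {f g : Zin K X} : InST f → InST g → InST (zbracket f g)

/-- Membership in `J(X)`, the subalgebra of `(Zin(X), {·,·})` generated by the
letters: the Jordan elements of `Zin(X)`. -/
inductive InJ {K X : Type} [Field K] : Zin K X → Prop
  | letter (x : X) : InJ (ofLetter x)
  | zero : InJ 0
  | add {f g : Zin K X} : InJ f → InJ g → InJ (f + g)
  | smul (c : K) {f : Zin K X} : InJ f → InJ (c • f)
  | jmul {f g : Zin K X} : InJ f → InJ g → InJ (jprod f g)

/-- The left-normed anticommutator `{{⋯{x₁,x₂}⋯},xₙ}` of the letters of a word. -/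
noncomputable def dynkinWord {K X : Type} [Field K] : List X → Zin K X
  | [] => 0
  | x :: xs => xs.foldl (fun acc y => jprod acc (ofLetter y)) (ofLetter x)

/-- The Dynkin map `D : Zin(X) → Zin(X)`. -/
noncomputable def dynkin {K X : Type} [Field K] (f : Zin K X) : Zin K X :=
  f.sum fun w c => c • dynkinWord w.1


/-! ### Auxiliary development -/

section Aux
variable {K X : Type} [Field K]

noncomputable def ofM (M : Multiset (List X)) : Zin K X := (M.map (ofList (K := K))).sum

@[simp] lemma ofM_zero : ofM (0 : Multiset (List X)) = (0 : Zin K X) := rfl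
@[simp] lemma ofM_add (M N : Multiset (List X)) : (ofM (M + N) : Zin K X) = ofM M + ofM N := by
  simp [ofM]
@[simp] lemma ofM_cons (l : List X) (M : Multiset (List X)) :
    (ofM (l ::ₘ M) : Zin K X) = ofList l + ofM M := by simp [ofM]
@[simp] lemma ofM_singleton (l : List X) :
    (ofM ({l} : Multiset (List X)) : Zin K X) = ofList l := by simp [ofM]
lemma ofLists_eq_ofM (L : List (List X)) : (ofLists L : Zin K X) = ofM ↑L := by
  simp [ofM, ofLists, Multiset.map_coe, Multiset.sum_coe]

/-- multiset of shuffles -/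
def mS {X : Type} (u v : List X) : Multiset (List X) := ↑(shuffles u v)

lemma mS_nil_left (v : List X) : mS ([] : List X) v = {v} := by simp [mS, shuffles]
lemma mS_nil_right (u : List X) : mS u ([] : List X) = {u} := by
  cases u <;> simp [mS, shuffles]
lemma mS_cons_cons (a b : X) (u v : List X) :
    mS (a :: u) (b :: v) = (mS u (b :: v)).map (a :: ·) + (mS (a :: u) v).map (b :: ·) := by
  simp [mS, shuffles, Multiset.map_coe]

lemma bind_id (M : Multiset (List X)) : (M.bind fun t => ({t} : Multiset (List X))) = M := by
  simpa using Multiset.bind_singleton (id : List X → List X) (s := M)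

lemma mS_comm (u v : List X) : mS u v = mS v u := by
  induction u generalizing v with
  | nil => cases v <;> simp [mS_nil_left, mS_nil_right]
  | cons a u' ih =>
    induction v with
    | nil => simp [mS_nil_left, mS_nil_right]
    | cons b v' ih2 =>
      rw [mS_cons_cons, mS_cons_cons b a, ih, ih2, add_comm]

lemma mS_assoc (u v w : List X) :
    (mS u v).bind (fun s => mS s w) = (mS v w).bind (fun t => mS u t) := by
  induction u generalizing v w with
  | nil =>
    simp [mS_nil_left, Multiset.singleton_bind, bind_id]
  | cons a u' ihu =>
    induction v generalizing w with
    | nil =>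
      simp [mS_nil_left, mS_nil_right, Multiset.singleton_bind, bind_id]
    | cons b v' ihv =>
      induction w with
      | nil =>
        simp [mS_nil_right, Multiset.singleton_bind, bind_id]
      | cons c w' ihw =>
        have hL : (mS (a::u') (b::v')).bind (fun s => mS s (c::w'))
            = ((mS u' (b::v')).bind fun s => mS s (c::w')).map (a :: ·)
              + ((((mS (a::u') (b::v')).bind fun s => mS s w').map (c :: ·))
              + ((mS (a::u') v').bind fun s => mS s (c::w')).map (b :: ·)) := by
          conv_lhs => rw [mS_cons_cons a b u' v']
          rw [Multiset.add_bind, Multiset.bind_map, Multiset.bind_map]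
          simp only [mS_cons_cons a c, mS_cons_cons b c, Multiset.bind_add, ← Multiset.map_bind]
          rw [mS_cons_cons a b u' v', Multiset.add_bind, Multiset.bind_map, Multiset.bind_map,
            Multiset.map_add]
          abel
        rw [hL, ihw, ihu, ihv]
        conv_rhs => rw [mS_cons_cons b c v' w']
        rw [Multiset.add_bind, Multiset.bind_map, Multiset.bind_map]
        simp only [mS_cons_cons a b, mS_cons_cons a c, Multiset.bind_add, ← Multiset.map_bind]
        rw [mS_cons_cons b c v' w', Multiset.add_bind, Multiset.bind_map, Multiset.bind_map,
          Multiset.map_add]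
        abel

lemma mS_last (u v : List X) (z y : X) :
    mS (u ++ [z]) (v ++ [y])
      = (mS (u ++ [z]) v).map (· ++ [y]) + (mS u (v ++ [y])).map (· ++ [z]) := by
  induction u generalizing v with
  | nil =>
    induction v with
    | nil =>
      simp only [List.nil_append]
      rw [mS_cons_cons z y [] [], mS_nil_left, mS_nil_right]
      simp [mS_nil_left, List.cons_append] <;> abel
    | cons b v' ihv =>
      simp only [List.nil_append] at ihv ⊢
      rw [List.cons_append, mS_cons_cons z b [] (v' ++ [y]), ihv,
        mS_cons_cons z b [] v']
      simp [mS_nil_left, Multiset.map_map, Function.comp, List.cons_append]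
  | cons a u' ihu =>
    induction v with
    | nil =>
      have h0 := ihu []
      simp only [List.nil_append, List.cons_append] at h0 ⊢
      rw [mS_cons_cons a y (u' ++ [z]) [], h0, mS_cons_cons a y u' []]
      simp [mS_nil_right, Multiset.map_map, Function.comp, List.cons_append]
    | cons b v' ihv =>
      have h1 := ihu (b :: v')
      simp only [List.nil_append, List.cons_append] at h1 ihv ⊢
      rw [mS_cons_cons a b (u' ++ [z]) (v' ++ [y]), h1, ihv,
        mS_cons_cons a b (u' ++ [z]) v', mS_cons_cons a b u' (v' ++ [y])]
      simp [Multiset.map_map, Function.comp, List.cons_append] <;> abel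

noncomputable def bsum (V : Word X → Word X → Zin K X) (f g : Zin K X) : Zin K X :=
  f.sum fun u cu => g.sum fun w cw => (cu * cw) • V u w

section Bil
variable (V : Word X → Word X → Zin K X)

lemma bsum_zero_left (g : Zin K X) : bsum V 0 g = 0 := Finsupp.sum_zero_index

lemma bsum_zero_right (f : Zin K X) : bsum V f 0 = 0 := by
  simp [bsum, Finsupp.sum_zero_index]

lemma bsum_add_left (f f' g : Zin K X) : bsum V (f + f') g = bsum V f g + bsum V f' g := by
  unfold bsum
  apply Finsupp.sum_add_index' <;> intros <;> simp [add_mul, add_smul, Finsupp.sum_add]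

lemma bsum_add_right (f g g' : Zin K X) : bsum V f (g + g') = bsum V f g + bsum V f g' := by
  unfold bsum
  rw [← Finsupp.sum_add]
  apply Finsupp.sum_congr
  intro u _
  apply Finsupp.sum_add_index' <;> intros <;> simp [mul_add, add_smul]

lemma bsum_smul_left (c : K) (f g : Zin K X) : bsum V (c • f) g = c • bsum V f g := by
  unfold bsum
  rw [Finsupp.sum_smul_index, Finsupp.smul_sum]
  · apply Finsupp.sum_congr
    intro u _
    rw [Finsupp.smul_sum]
    apply Finsupp.sum_congr
    intro w _
    rw [smul_smul, mul_assoc]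
  · intro u; simp [Finsupp.sum_zero_index]

lemma bsum_smul_right (c : K) (f g : Zin K X) : bsum V f (c • g) = c • bsum V f g := by
  unfold bsum
  rw [Finsupp.smul_sum]
  apply Finsupp.sum_congr
  intro u _
  rw [Finsupp.sum_smul_index, Finsupp.smul_sum]
  · apply Finsupp.sum_congr
    intro w _
    rw [smul_smul]
    congr 1
    ring
  · intro w; simp

lemma bsum_single_single (u w : Word X) :
    bsum V (Finsupp.single u (1 : K)) (Finsupp.single w 1) = V u w := by
  unfold bsum
  rw [Finsupp.sum_single_index, Finsupp.sum_single_index] <;>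
    simp [Finsupp.sum_zero_index, Finsupp.sum_single_index]

end Bil

lemma zmul_eq_bsum (f g : Zin K X) :
    zmul f g = bsum (fun u w =>
      ofLists ((shuffles u.1 w.1.dropLast).map fun s => s ++ [w.1.getLast w.2])) f g := rfl

lemma shMul_eq_bsum (f g : Zin K X) :
    shMul f g = bsum (fun u w => ofLists (shuffles u.1 w.1)) f g := rfl

lemma shMul_zero_left (g : Zin K X) : shMul 0 g = 0 := bsum_zero_left _ g
lemma shMul_zero_right (f : Zin K X) : shMul f 0 = 0 := bsum_zero_right _ f
lemma shMul_add_left (f f' g : Zin K X) : shMul (f + f') g = shMul f g + shMul f' g :=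
  bsum_add_left _ f f' g
lemma shMul_add_right (f g g' : Zin K X) : shMul f (g + g') = shMul f g + shMul f g' :=
  bsum_add_right _ f g g'
lemma shMul_smul_left (c : K) (f g : Zin K X) : shMul (c • f) g = c • shMul f g :=
  bsum_smul_left _ c f g
lemma shMul_smul_right (c : K) (f g : Zin K X) : shMul f (c • g) = c • shMul f g :=
  bsum_smul_right _ c f g

lemma jprod_zero_left (g : Zin K X) : jprod 0 g = 0 := by
  simp [jprod, zmul_eq_bsum, bsum_zero_left, bsum_zero_right]
lemma jprod_zero_right (f : Zin K X) : jprod f 0 = 0 := by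
  simp [jprod, zmul_eq_bsum, bsum_zero_left, bsum_zero_right]
lemma jprod_add_left (f f' g : Zin K X) : jprod (f + f') g = jprod f g + jprod f' g := by
  simp only [jprod, zmul_eq_bsum, bsum_add_left, bsum_add_right]; abel
lemma jprod_add_right (f g g' : Zin K X) : jprod f (g + g') = jprod f g + jprod f g' := by
  simp only [jprod, zmul_eq_bsum, bsum_add_left, bsum_add_right]; abel
lemma jprod_smul_left (c : K) (f g : Zin K X) : jprod (c • f) g = c • jprod f g := by
  simp only [jprod, zmul_eq_bsum, bsum_smul_left, bsum_smul_right, smul_add]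
lemma jprod_smul_right (c : K) (f g : Zin K X) : jprod f (c • g) = c • jprod f g := by
  simp only [jprod, zmul_eq_bsum, bsum_smul_left, bsum_smul_right, smul_add]

lemma ofList_eq_single {l : List X} (h : l ≠ []) :
    (ofList l : Zin K X) = Finsupp.single ⟨l, h⟩ 1 := by
  cases l with
  | nil => exact absurd rfl h
  | cons a t => rfl

lemma zmul_word (u w : Word X) :
    zmul (Finsupp.single u (1:K)) (Finsupp.single w 1)
      = ofM ((mS u.1 w.1.dropLast).map (· ++ [w.1.getLast w.2])) := by
  rw [zmul_eq_bsum, bsum_single_single, ofLists_eq_ofM]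
  congr 1

lemma shMul_word (u w : Word X) :
    shMul (Finsupp.single u (1:K)) (Finsupp.single w 1) = ofM (mS u.1 w.1) := by
  rw [shMul_eq_bsum, bsum_single_single, ofLists_eq_ofM]; rfl

lemma jprod_word (u w : Word X) :
    jprod (Finsupp.single u (1:K)) (Finsupp.single w 1)
      = shMul (Finsupp.single u (1:K)) (Finsupp.single w 1) := by
  rw [shMul_word]
  show zmul _ _ + zmul _ _ = _
  rw [zmul_word, zmul_word]
  have hu := List.dropLast_append_getLast u.2
  have hw := List.dropLast_append_getLast w.2
  conv_rhs => rw [← hu, ← hw]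
  rw [mS_last, ofM_add]
  congr 2
  · rw [hu]
  · rw [mS_comm, hw]

lemma single_eq_smul (u : Word X) (c : K) :
    Finsupp.single u c = c • Finsupp.single u (1 : K) := by
  rw [Finsupp.smul_single, smul_eq_mul, mul_one]

lemma jprod_eq_shMul (f g : Zin K X) : jprod f g = shMul f g := by
  induction f using Finsupp.induction_linear with
  | zero => rw [jprod_zero_left, shMul_zero_left]
  | add f f' hf hf' => rw [jprod_add_left, shMul_add_left, hf, hf']
  | single u c =>
    induction g using Finsupp.induction_linear with
    | zero => rw [jprod_zero_right, shMul_zero_right]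
    | add g g' hg hg' => rw [jprod_add_right, shMul_add_right, hg, hg']
    | single w d =>
      rw [single_eq_smul u c, single_eq_smul w d, jprod_smul_left, jprod_smul_right,
        shMul_smul_left, shMul_smul_right, jprod_word]

lemma mem_shuffles_ne_nil {u v s : List X} (hu : u ≠ []) (hs : s ∈ shuffles u v) : s ≠ [] := by
  cases u with
  | nil => exact absurd rfl hu
  | cons a as =>
    cases v with
    | nil =>
      simp [shuffles] at hs; subst hs; simp
    | cons b bs =>
      simp [shuffles] at hs
      rcases hs with ⟨t, _, rfl⟩ | ⟨t, _, rfl⟩ <;> simp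

lemma mem_mS_ne_nil {u v s : List X} (h : u ≠ [] ∨ v ≠ []) (hs : s ∈ mS u v) : s ≠ [] := by
  rcases h with h | h
  · exact mem_shuffles_ne_nil h (by exact_mod_cast hs)
  · rw [mS_comm] at hs
    exact mem_shuffles_ne_nil h (by exact_mod_cast hs)

lemma shMul_ofM_left (M : Multiset (List X)) (hM : ∀ l ∈ M, l ≠ []) (w : Word X) :
    shMul (ofM M : Zin K X) (Finsupp.single w 1) = ofM (M.bind fun s => mS s w.1) := by
  induction M using Multiset.induction_on with
  | empty => simp [shMul_zero_left]
  | cons l M ih =>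
    rw [ofM_cons, shMul_add_left, ih (fun x hx => hM x (Multiset.mem_cons_of_mem hx)),
      Multiset.cons_bind, ofM_add, ofList_eq_single (hM l (Multiset.mem_cons_self l M))]
    erw [shMul_word]

lemma shMul_ofM_right (u : Word X) (M : Multiset (List X)) (hM : ∀ l ∈ M, l ≠ []) :
    shMul (Finsupp.single u (1:K)) (ofM M) = ofM (M.bind fun t => mS u.1 t) := by
  induction M using Multiset.induction_on with
  | empty => simp [shMul_zero_right]
  | cons l M ih =>
    rw [ofM_cons, shMul_add_right, ih (fun x hx => hM x (Multiset.mem_cons_of_mem hx)),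
      Multiset.cons_bind, ofM_add, ofList_eq_single (hM l (Multiset.mem_cons_self l M))]
    erw [shMul_word]

lemma shMul_assoc (f g h : Zin K X) : shMul (shMul f g) h = shMul f (shMul g h) := by
  induction f using Finsupp.induction_linear with
  | zero => simp [shMul_zero_left]
  | add f f' hf hf' => simp [shMul_add_left, hf, hf']
  | single u c =>
    induction g using Finsupp.induction_linear with
    | zero => simp [shMul_zero_left, shMul_zero_right]
    | add g g' hg hg' => simp [shMul_add_left, shMul_add_right, hg, hg']
    | single v d =>
      induction h using Finsupp.induction_linear with
      | zero => simp [shMul_zero_right]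
      | add h h' hh hh' => simp [shMul_add_right, hh, hh']
      | single w e =>
        rw [single_eq_smul u c, single_eq_smul v d, single_eq_smul w e]
        simp only [shMul_smul_left, shMul_smul_right]
        congr 1
        congr 1
        congr 1
        rw [shMul_word, shMul_ofM_left _ (fun l hl => mem_mS_ne_nil (Or.inl u.2) hl) w,
          shMul_word, shMul_ofM_right u _ (fun l hl => mem_mS_ne_nil (Or.inl v.2) hl),
          mS_assoc]

/-- the symmetrized word: sum over all permutations (with multiplicity). -/
noncomputable def Ee (w : List X) : Zin K X := ofM (↑w.permutations')

lemma Ee_perm {u w : List X} (h : u.Perm w) : (Ee u : Zin K X) = Ee w := by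
  unfold Ee; congr 1; exact Multiset.coe_eq_coe.2 h.permutations'

lemma Ee_single (x : X) : (Ee [x] : Zin K X) = ofLetter x := by
  simp [Ee, List.permutations', List.permutations'Aux, ofLetter, ofM, ofList]

lemma mS_singleton_right (l : List X) (y : X) :
    mS l [y] = ↑(List.permutations'Aux y l) := by
  induction l with
  | nil => simp [mS, shuffles, List.permutations'Aux]
  | cons b bs ih =>
    rw [show (List.permutations'Aux y (b :: bs))
        = (y :: b :: bs) :: (List.permutations'Aux y bs).map (b :: ·) from rfl]
    rw [mS_cons_cons b y bs [], mS_nil_right, ih]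
    simp only [Multiset.map_coe, Multiset.map_singleton, ← Multiset.cons_coe,
      ← Multiset.singleton_add]
    abel

lemma mem_permutations'_ne_nil {w l : List X} (hw : w ≠ []) (hl : l ∈ w.permutations') :
    l ≠ [] := by
  intro h
  subst h
  exact hw (List.nil_perm.1 (List.mem_permutations'.1 hl))

lemma shMul_Ee_letter {w : List X} (hw : w ≠ []) (y : X) :
    shMul (Ee w : Zin K X) (ofLetter y) = Ee (w ++ [y]) := by
  have hy : (ofLetter y : Zin K X) = Finsupp.single ⟨[y], by simp⟩ 1 := rfl
  erw [hy, Ee, shMul_ofM_left _ (fun l hl => mem_permutations'_ne_nil hw (by exact_mod_cast hl))]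
  have h1 : ((↑w.permutations' : Multiset (List X)).bind fun s => mS s [y])
      = ↑((w.permutations').flatMap (List.permutations'Aux y)) := by
    simp only [mS_singleton_right]
    exact Multiset.coe_bind _ _
  rw [h1]
  have h2 : (w.permutations').flatMap (List.permutations'Aux y) = (y :: w).permutations' := rfl
  rw [h2, Ee]
  congr 1
  exact Multiset.coe_eq_coe.2 (List.Perm.permutations' (List.perm_append_singleton y w).symm)

lemma dynkinWord_append_letter (l : List X) (hl : l ≠ []) (y : X) :
    (dynkinWord (l ++ [y]) : Zin K X) = jprod (dynkinWord l) (ofLetter y) := by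
  cases l with
  | nil => exact absurd rfl hl
  | cons x xs => simp [dynkinWord, List.foldl_append]

lemma dynkinWord_eq_Ee (w : List X) (hw : w ≠ []) : (dynkinWord w : Zin K X) = Ee w := by
  induction w using List.reverseRecOn with
  | nil => exact absurd rfl hw
  | append_singleton l y ih =>
    rcases eq_or_ne l [] with rfl | hl
    · simp only [List.nil_append]
      rw [Ee_single]
      simp [dynkinWord]
    · rw [dynkinWord_append_letter l hl y, ih hl, jprod_eq_shMul, shMul_Ee_letter hl]

lemma Ee_ne_nil_arg {w : List X} (hw : w ≠ []) : True := trivial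

lemma Ee_append {u v : List X} (hu : u ≠ []) (hv : v ≠ []) :
    shMul (Ee u : Zin K X) (Ee v) = Ee (u ++ v) := by
  induction v using List.reverseRecOn with
  | nil => exact absurd rfl hv
  | append_singleton v0 y ih =>
    rcases eq_or_ne v0 [] with rfl | h
    · rw [List.nil_append, Ee_single, shMul_Ee_letter hu]
    · rw [← shMul_Ee_letter h y, ← shMul_assoc, ih h, shMul_Ee_letter (by simp [hu]),
        List.append_assoc]

lemma dynkin_single (w : Word X) (c : K) :
    dynkin (Finsupp.single w c) = c • dynkinWord w.1 :=
  Finsupp.sum_single_index (by simp)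

lemma dynkin_zero : dynkin (0 : Zin K X) = 0 := Finsupp.sum_zero_index

lemma dynkin_add (f g : Zin K X) : dynkin (f + g) = dynkin f + dynkin g :=
  Finsupp.sum_add_index' (by simp) (by intros; rw [add_smul])

lemma dynkin_smul (c : K) (f : Zin K X) : dynkin (c • f) = c • dynkin f := by
  unfold dynkin
  rw [Finsupp.sum_smul_index, Finsupp.smul_sum]
  · apply Finsupp.sum_congr
    intro w _
    rw [smul_smul]
  · intro w; simp

lemma dynkin_ofM (M : Multiset (List X)) :
    dynkin (ofM M : Zin K X) = (M.map (fun l => (dynkinWord l : Zin K X))).sum := by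
  induction M using Multiset.induction_on with
  | empty => simp [dynkin_zero]
  | cons l M ih =>
    rw [ofM_cons, dynkin_add, ih, Multiset.map_cons, Multiset.sum_cons]
    congr 1
    cases l with
    | nil => simp [ofList, dynkin_zero, dynkinWord]
    | cons a t =>
      erw [ofList, dynkin_single, one_smul]

lemma length_permutations' (w : List X) : w.permutations'.length = w.length.factorial := by
  rw [← List.Perm.length_eq (List.permutations_perm_permutations' w),
    List.length_permutations]

lemma dynkin_Ee {w : List X} (hw : w ≠ []) :
    dynkin (Ee w : Zin K X) = (w.length.factorial : K) • Ee w := by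
  rw [Ee, dynkin_ofM]
  have hcongr : ∀ l ∈ (↑w.permutations' : Multiset (List X)),
      (dynkinWord l : Zin K X) = Ee w := by
    intro l hl
    have hp : l.Perm w := List.mem_permutations'.1 (by exact_mod_cast hl)
    rw [dynkinWord_eq_Ee l (mem_permutations'_ne_nil hw (by exact_mod_cast hl)), Ee_perm hp]
  rw [Multiset.map_congr rfl hcongr, Multiset.map_const', Multiset.sum_replicate,
    Multiset.coe_card, length_permutations', Nat.cast_smul_eq_nsmul]
  rfl

lemma InJ_dynkinWord (w : List X) : InJ (dynkinWord w : Zin K X) := by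
  cases w with
  | nil => exact InJ.zero
  | cons x xs =>
    rw [dynkinWord]
    have : ∀ (l : List X) (acc : Zin K X), InJ acc →
        InJ (l.foldl (fun acc y => jprod acc (ofLetter y)) acc) := by
      intro l
      induction l with
      | nil => intro acc h; exact h
      | cons y ys ih =>
        intro acc h
        exact ih _ (InJ.jmul h (InJ.letter y))
    exact this xs _ (InJ.letter x)

lemma InJ_Ee {w : List X} (hw : w ≠ []) : InJ (Ee w : Zin K X) := by
  rw [← dynkinWord_eq_Ee w hw]; exact InJ_dynkinWord w

lemma InJ_finset_sum {ι : Type} (s : Finset ι) (g : ι → Zin K X)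
    (h : ∀ i ∈ s, InJ (g i)) : InJ (∑ i ∈ s, g i) := by
  classical
  induction s using Finset.induction_on with
  | empty => simpa using InJ.zero
  | insert _ _ hx ih =>
    rw [Finset.sum_insert hx]
    exact InJ.add (h _ (Finset.mem_insert_self _ _))
      (ih fun i hi => h i (Finset.mem_insert_of_mem hi))

lemma InJ_dynkin (f : Zin K X) : InJ (dynkin f) := by
  unfold dynkin Finsupp.sum
  exact InJ_finset_sum _ _ fun w _ => InJ.smul _ (InJ_dynkinWord w.1)

/-! ### words from exponent vectors -/

noncomputable def wd (d : X →₀ ℕ) : List X :=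
  d.support.toList.flatMap fun x => List.replicate (d x) x

lemma count_wd (d : X →₀ ℕ) (x : X) [DecidableEq X] : (wd d).count x = d x := by
  classical
  rw [wd, List.count_flatMap]
  have h1 : ∀ y ∈ d.support.toList,
      (List.count x ∘ fun x_1 => List.replicate (d x_1) x_1) y = if y = x then d y else 0 := by
    intro y _
    simp [List.count_replicate]
  rw [List.map_congr_left h1, Finset.sum_map_toList]
  rw [Finset.sum_ite_eq' d.support x (fun y => d y)]
  by_cases hx : x ∈ d.support
  · simp [hx]
  · simp [hx, Finsupp.notMem_support_iff.1 hx]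

lemma wd_ne_nil {d : X →₀ ℕ} (hd : d ≠ 0) : wd d ≠ [] := by
  obtain ⟨x, hx⟩ := Finsupp.support_nonempty_iff.2 hd
  have hmem : x ∈ wd d := by
    rw [wd, List.mem_flatMap]
    exact ⟨x, Finset.mem_toList.2 hx, List.mem_replicate.2 ⟨Finsupp.mem_support_iff.1 hx, rfl⟩⟩
  exact List.ne_nil_of_mem hmem

lemma wd_add_perm (d e : X →₀ ℕ) : (wd (d + e)).Perm (wd d ++ wd e) := by
  classical
  rw [List.perm_iff_count]
  intro x
  simp [List.count_append, count_wd]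

end Aux



section Psi
variable {K X : Type} [Field K]

lemma jprod_finset_sum_left {ι : Type} (s : Finset ι) (F : ι → Zin K X) (g : Zin K X) :
    jprod (∑ i ∈ s, F i) g = ∑ i ∈ s, jprod (F i) g := by
  classical
  induction s using Finset.induction_on with
  | empty => simp [jprod_zero_left]
  | insert _ _ hx ih => rw [Finset.sum_insert hx, jprod_add_left, ih, Finset.sum_insert hx]

lemma jprod_finset_sum_right {ι : Type} (s : Finset ι) (f : Zin K X) (G : ι → Zin K X) :
    jprod f (∑ i ∈ s, G i) = ∑ i ∈ s, jprod f (G i) := by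
  classical
  induction s using Finset.induction_on with
  | empty => simp [jprod_zero_right]
  | insert _ _ hx ih => rw [Finset.sum_insert hx, jprod_add_right, ih, Finset.sum_insert hx]

lemma dynkin_finset_sum {ι : Type} (s : Finset ι) (F : ι → Zin K X) :
    dynkin (∑ i ∈ s, F i) = ∑ i ∈ s, dynkin (F i) := by
  classical
  induction s using Finset.induction_on with
  | empty => simp [dynkin_zero]
  | insert _ _ hx ih => rw [Finset.sum_insert hx, dynkin_add, ih, Finset.sum_insert hx]

variable (K X) in
noncomputable def psi : MvPolynomial X K →ₗ[K] Zin K X :=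
  (MvPolynomial.basisMonomials X K).constr K fun d => Ee (wd d)

lemma psi_apply_basis (d : X →₀ ℕ) :
    psi K X ((MvPolynomial.basisMonomials X K) d) = Ee (wd d) :=
  Module.Basis.constr_basis _ _ _ _

lemma psi_monomial (d : X →₀ ℕ) (c : K) :
    psi K X (MvPolynomial.monomial d c) = c • Ee (wd d) := by
  have hb : ((MvPolynomial.basisMonomials X K) d : MvPolynomial X K)
      = MvPolynomial.monomial d 1 := by
    rw [MvPolynomial.coe_basisMonomials]
  have h : (MvPolynomial.monomial d c : MvPolynomial X K)
      = c • (MvPolynomial.basisMonomials X K) d := by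
    rw [hb, MvPolynomial.smul_monomial, smul_eq_mul, mul_one]
  rw [h, map_smul, psi_apply_basis]

lemma psi_X (x : X) : psi K X (MvPolynomial.X x) = ofLetter x := by
  have hX : (MvPolynomial.X x : MvPolynomial X K)
      = MvPolynomial.monomial (Finsupp.single x 1) 1 := rfl
  rw [hX, psi_monomial, one_smul]
  have hwd : wd (Finsupp.single x (1:ℕ)) = [x] := by
    rw [wd, Finsupp.support_single_ne_zero x one_ne_zero, Finset.toList_singleton]
    simp
  rw [hwd, Ee_single]

lemma psi_eq_sum (p : MvPolynomial X K) :
    psi K X p = ∑ d ∈ p.support, MvPolynomial.coeff d p • Ee (wd d) := by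
  conv_lhs => rw [← MvPolynomial.support_sum_monomial_coeff p]
  rw [map_sum]
  exact Finset.sum_congr rfl fun d _ => psi_monomial d _

lemma support_ne_zero_of_cc {p : MvPolynomial X K} (hp : MvPolynomial.constantCoeff p = 0)
    {d : X →₀ ℕ} (hd : d ∈ p.support) : d ≠ 0 := by
  rintro rfl
  rw [MvPolynomial.mem_support_iff] at hd
  rw [MvPolynomial.constantCoeff_eq] at hp
  exact hd hp

lemma InJ_psi {p : MvPolynomial X K} (hp : MvPolynomial.constantCoeff p = 0) :
    InJ (psi K X p) := by
  rw [psi_eq_sum]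
  apply InJ_finset_sum
  intro d hd
  exact InJ.smul _ (InJ_Ee (wd_ne_nil (support_ne_zero_of_cc hp hd)))

lemma psi_mul {p q : MvPolynomial X K} (hp : MvPolynomial.constantCoeff p = 0)
    (hq : MvPolynomial.constantCoeff q = 0) :
    psi K X (p * q) = jprod (psi K X p) (psi K X q) := by
  conv_lhs => rw [← MvPolynomial.support_sum_monomial_coeff p,
    ← MvPolynomial.support_sum_monomial_coeff q]
  rw [Finset.sum_mul_sum, map_sum, psi_eq_sum p, psi_eq_sum q, jprod_finset_sum_left]
  apply Finset.sum_congr rfl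
  intro d hd
  rw [map_sum, jprod_finset_sum_right]
  apply Finset.sum_congr rfl
  intro e he
  rw [MvPolynomial.monomial_mul, psi_monomial, jprod_smul_left, jprod_smul_right,
    jprod_eq_shMul, Ee_append (wd_ne_nil (support_ne_zero_of_cc hp hd))
      (wd_ne_nil (support_ne_zero_of_cc hq he)),
    ← Ee_perm (wd_add_perm d e), mul_smul]

lemma ofList_apply_ne {l : List X} {u : Word X} (h : l ≠ u.1) : (ofList l : Zin K X) u = 0 := by
  cases l with
  | nil => rfl
  | cons a t =>
    rw [ofList]
    exact Finsupp.single_eq_of_ne (fun hh => h (congrArg Subtype.val hh.symm))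

lemma ofList_apply_self (u : Word X) : (ofList u.1 : Zin K X) u = 1 := by
  obtain ⟨l, hl⟩ := u
  cases l with
  | nil => exact absurd rfl hl
  | cons a t => exact Finsupp.single_eq_same

lemma ofM_apply [DecidableEq (List X)] (M : Multiset (List X)) (u : Word X) :
    (ofM M : Zin K X) u = (M.count u.1 : K) := by
  induction M using Multiset.induction_on with
  | empty => simp
  | cons l M ih =>
    rw [ofM_cons, Finsupp.add_apply, ih, Multiset.count_cons]
    by_cases h : u.1 = l
    · rw [if_pos h, ← h, ofList_apply_self]
      push_cast
      ring
    · rw [if_neg h, ofList_apply_ne (fun hh => h hh.symm)]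
      push_cast
      ring

lemma Ee_apply_ne {w : List X} {u : Word X} (h : ¬ u.1.Perm w) : (Ee w : Zin K X) u = 0 := by
  classical
  rw [Ee, ofM_apply]
  have hc : (↑w.permutations' : Multiset (List X)).count u.1 = 0 := by
    rw [Multiset.count_eq_zero]
    intro hm
    exact h (List.mem_permutations'.1 (by exact_mod_cast hm))
  rw [hc]
  simp

lemma Ee_apply_self [CharZero K] (w : List X) (u : Word X) (h : u.1 = w) :
    (Ee w : Zin K X) u ≠ 0 := by
  classical
  rw [Ee, ofM_apply]
  have hm : u.1 ∈ (↑w.permutations' : Multiset (List X)) := by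
    rw [h]
    exact_mod_cast List.mem_permutations'.2 (List.Perm.refl w)
  have hc : (↑w.permutations' : Multiset (List X)).count u.1 ≠ 0 := by
    have := Multiset.count_pos.2 hm
    omega
  exact_mod_cast Nat.cast_ne_zero.2 hc

lemma wd_inj_perm {d e : X →₀ ℕ} (h : (wd d).Perm (wd e)) : d = e := by
  classical
  ext x
  rw [← count_wd d x, ← count_wd e x, List.perm_iff_count.1 h x]

lemma psi_inj [CharZero K] {p : MvPolynomial X K} (hp : MvPolynomial.constantCoeff p = 0)
    (h : psi K X p = 0) : p = 0 := by
  classical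
  by_contra hne
  obtain ⟨d, hd⟩ := MvPolynomial.support_nonempty.2 hne
  set u : Word X := ⟨wd d, wd_ne_nil (support_ne_zero_of_cc hp hd)⟩ with hu
  have happ : (psi K X p) u = 0 := by rw [h]; rfl
  rw [psi_eq_sum, Finsupp.finset_sum_apply] at happ
  have hsum : ∑ e ∈ p.support, MvPolynomial.coeff e p * (Ee (wd e) : Zin K X) u = 0 := by
    simpa [Finsupp.smul_apply] using happ
  rw [Finset.sum_eq_single d] at hsum
  · rcases mul_eq_zero.1 hsum with h1 | h2
    · exact (MvPolynomial.mem_support_iff.1 hd) h1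
    · exact Ee_apply_self (wd d) u rfl h2
  · intro e he hne2
    rw [Ee_apply_ne, mul_zero]
    intro hperm
    exact hne2 (wd_inj_perm hperm).symm
  · intro hd'; exact absurd hd hd'

lemma psi_surj {f : Zin K X} (hf : InJ f) :
    ∃ p : MvPolynomial X K, MvPolynomial.constantCoeff p = 0 ∧ psi K X p = f := by
  induction hf with
  | letter x => exact ⟨MvPolynomial.X x, by simp, psi_X x⟩
  | zero => exact ⟨0, by simp, by simp⟩
  | add hf hg ihf ihg =>
    obtain ⟨p, hp0, hp⟩ := ihf
    obtain ⟨q, hq0, hq⟩ := ihg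
    exact ⟨p + q, by rw [map_add, hp0, hq0, add_zero], by rw [map_add, hp, hq]⟩
  | smul c hf ih =>
    obtain ⟨p, hp0, hp⟩ := ih
    refine ⟨c • p, ?_, by rw [map_smul, hp]⟩
    rw [MvPolynomial.smul_eq_C_mul, map_mul, hp0, mul_zero]
  | jmul hf hg ihf ihg =>
    obtain ⟨p, hp0, hp⟩ := ihf
    obtain ⟨q, hq0, hq⟩ := ihg
    exact ⟨p * q, by rw [map_mul, hp0, hq0, mul_zero],
      by rw [psi_mul hp0 hq0, hp, hq]⟩

end Psi

section Deg
variable {K X : Type} [Field K]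

lemma filter_eq_self_of {p : Word X → Prop} [DecidablePred p] {f : Zin K X}
    (h : ∀ a ∈ f.support, p a) :
    f.filter p = f := by
  ext a
  rw [Finsupp.filter_apply]
  by_cases ha : p a
  · rw [if_pos ha]
  · rw [if_neg ha]
    exact (Finsupp.notMem_support_iff.1 (fun hs => ha (h a hs))).symm

lemma filter_eq_zero_of {p : Word X → Prop} [DecidablePred p] {f : Zin K X}
    (h : ∀ a ∈ f.support, ¬ p a) :
    f.filter p = 0 := by
  ext a
  rw [Finsupp.filter_apply]
  by_cases ha : p a
  · rw [if_pos ha]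
    have : a ∉ f.support := fun hs => h a hs ha
    rw [Finsupp.notMem_support_iff.1 this]
    rfl
  · rw [if_neg ha]
    rfl

instance degDec {X : Type} (n : ℕ) : DecidablePred (fun w : Word X => w.1.length = n) :=
  fun _ => Nat.decEq _ _

noncomputable def deg (n : ℕ) : Zin K X →ₗ[K] Zin K X where
  toFun f := Finsupp.filter (fun w : Word X => w.1.length = n) f
  map_add' f g := Finsupp.filter_add
  map_smul' c f := Finsupp.filter_smul

lemma deg_apply (n : ℕ) (f : Zin K X) :
    deg n f = Finsupp.filter (fun w : Word X => w.1.length = n) f := rfl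

lemma support_ofM_sub (M : Multiset (List X)) (u : Word X)
    (hu : u ∈ (ofM M : Zin K X).support) : u.1 ∈ M := by
  classical
  by_contra h
  have hv : (ofM M : Zin K X) u = (M.count u.1 : K) := ofM_apply M u
  rw [Multiset.count_eq_zero.2 h] at hv
  simp only [Nat.cast_zero] at hv
  exact (Finsupp.mem_support_iff.1 hu) hv

lemma Ee_support_length {w : List X} {u : Word X} (hu : u ∈ (Ee w : Zin K X).support) :
    u.1.length = w.length := by
  have hm := support_ofM_sub _ u hu
  exact (List.mem_permutations'.1 (by exact_mod_cast hm)).length_eq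

lemma deg_Ee (n : ℕ) (w : List X) :
    deg n (Ee w : Zin K X) = if w.length = n then Ee w else 0 := by
  rw [deg_apply]
  split_ifs with h
  · apply filter_eq_self_of
    intro a ha
    show a.1.length = n
    rw [Ee_support_length ha]
    exact h
  · apply filter_eq_zero_of
    intro a ha
    show ¬ a.1.length = n
    rw [Ee_support_length ha]
    exact h

lemma dynkin_deg_Ee (n : ℕ) {w : List X} (hw : w ≠ []) :
    dynkin (deg n (Ee w : Zin K X)) = (n.factorial : K) • deg n (Ee w : Zin K X) := by
  rw [deg_Ee]
  split_ifs with h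
  · rw [dynkin_Ee hw, h]
  · rw [dynkin_zero, smul_zero]

lemma dynkin_of_InJ {n : ℕ} {f : Zin K X} (hf : InJ f)
    (hsupp : ∀ w ∈ f.support, (w : Word X).1.length = n) :
    dynkin f = (n.factorial : K) • f := by
  obtain ⟨p, hp0, rfl⟩ := psi_surj hf
  have hfix : deg n (psi K X p) = psi K X p := by
    rw [deg_apply]
    exact filter_eq_self_of hsupp
  have hdsum : deg n (psi K X p)
      = ∑ d ∈ p.support, MvPolynomial.coeff d p • deg n (Ee (wd d)) := by
    rw [psi_eq_sum, map_sum]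
    exact Finset.sum_congr rfl fun d _ => map_smul _ _ _
  calc dynkin (psi K X p) = dynkin (deg n (psi K X p)) := by rw [hfix]
    _ = (n.factorial : K) • deg n (psi K X p) := by
        rw [hdsum, dynkin_finset_sum, Finset.smul_sum]
        apply Finset.sum_congr rfl
        intro d hd
        rw [dynkin_smul, dynkin_deg_Ee n (wd_ne_nil (support_ne_zero_of_cc hp0 hd)),
          smul_smul, smul_smul, mul_comm]
    _ = (n.factorial : K) • psi K X p := by rw [hfix]

lemma InJ_of_dynkin {n : ℕ} [CharZero K] {f : Zin K X}
    (h : dynkin f = (n.factorial : K) • f) : InJ f := by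
  have hfac : (n.factorial : K) ≠ 0 := Nat.cast_ne_zero.2 (Nat.factorial_ne_zero n)
  have hf : f = (n.factorial : K)⁻¹ • dynkin f := by
    rw [h, smul_smul, inv_mul_cancel₀ hfac, one_smul]
  rw [hf]
  exact InJ.smul _ (InJ_dynkin f)

end Deg

/-- Jordan criterion: a homogeneous element `f` of degree `n` of `Zin(X)` is a Jordan
element iff `D(f) = n!·f`; moreover the canonical homomorphism from the free non-unital
commutative associative algebra on `X` (polynomials with zero constant term) onto `J(X)`,
sending `x_{i_1}⋯x_{i_n}` to `{{⋯{x_{i_1},x_{i_2}}⋯},x_{i_n}}`, is an isomorphism. -/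
theorem jordan_criterion_and_iso (K X : Type) [Field K] [CharZero K] :
    (∀ n : ℕ, 1 ≤ n → ∀ f : Zin K X, (∀ w ∈ f.support, (w : Word X).1.length = n) →
      (InJ f ↔ dynkin f = (n.factorial : K) • f)) ∧
    ∃ ψ : MvPolynomial X K →ₗ[K] Zin K X,
      (∀ x : X, ψ (MvPolynomial.X x) = ofLetter x) ∧
      (∀ p q : MvPolynomial X K, MvPolynomial.constantCoeff p = 0 →
        MvPolynomial.constantCoeff q = 0 → ψ (p * q) = jprod (ψ p) (ψ q)) ∧
      (∀ p : MvPolynomial X K, MvPolynomial.constantCoeff p = 0 → ψ p = 0 → p = 0) ∧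
      (∀ p : MvPolynomial X K, MvPolynomial.constantCoeff p = 0 → InJ (ψ p)) ∧
      (∀ f : Zin K X, InJ f →
        ∃ p : MvPolynomial X K, MvPolynomial.constantCoeff p = 0 ∧ ψ p = f) := by
  constructor
  · intro n _hn f hsupp
    constructor
    · intro hf
      exact dynkin_of_InJ hf hsupp
    · intro h
      exact InJ_of_dynkin h
  · refine ⟨psi K X, psi_X, ?_, ?_, ?_, ?_⟩
    · intro p q hp hq
      exact psi_mul hp hq
    · intro p hp h
      exact psi_inj hp h
    · intro p hp
      exact InJ_psi hp
    · intro f hf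
      exact psi_surj hf
end

section
/- For a word x_{i_1}⋯x_{i_m} with m = 2: [\bar{x_{i_1}x_{i_2}}, x_{j_1}] = \bar{x_{i_1}x_{i_2}x_{j_1}} − \bar{x_{i_2}x_{i_1}x_{j_1}} − \bar{x_{j_1}x_{i_1}x_{i_2}}; and for m > 2: [\bar{x_{i_1}⋯x_{i_{m−1}}x_{i_m}}, x_{j_1}] = \bar{x_{i_1}⋯x_{i_m}x_{j_1}} − \bar{x_{i_1}⋯x_{i_{m−2}}x_{i_m}x_{i_{m−1}}x_{j_1}} − \bar{(x_{j_1} ⧢ x_{i_1}⋯x_{i_{m−2}})x_{i_{m−1}}x_{i_m}}, where [a,b] = a∘b − b∘a. -/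
section Lemmas
variable {K X : Type} [Field K]

lemma zmul_single_single (u w : Word X) (c d : K) :
    zmul (Finsupp.single u c) (Finsupp.single w d) =
      (c * d) • ofLists ((shuffles u.1 w.1.dropLast).map fun s => s ++ [w.1.getLast w.2]) := by
  unfold zmul
  rw [Finsupp.sum_single_index, Finsupp.sum_single_index]
  · simp
  · rw [Finsupp.sum_single_index] <;> simp

lemma zmul_add_left (f g h : Zin K X) : zmul (f + g) h = zmul f h + zmul g h := by
  unfold zmul
  rw [Finsupp.sum_add_index'] <;> intros <;> simp [add_mul, add_smul, Finsupp.sum_add]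

lemma zmul_add_right (f g h : Zin K X) : zmul f (g + h) = zmul f g + zmul f h := by
  unfold zmul
  rw [← Finsupp.sum_add]
  apply Finsupp.sum_congr
  intro u _
  rw [Finsupp.sum_add_index'] <;> intros <;> simp [mul_add, add_smul]

lemma zmul_zero_left (h : Zin K X) : zmul 0 h = 0 := by simp [zmul]

lemma zmul_zero_right (h : Zin K X) : zmul h 0 = 0 := by simp [zmul]

lemma zmul_sub_left (f g h : Zin K X) : zmul (f - g) h = zmul f h - zmul g h := by
  have := zmul_add_left (f - g) g h
  rw [sub_add_cancel] at this
  rw [this]; abel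

lemma zmul_sub_right (f g h : Zin K X) : zmul f (g - h) = zmul f g - zmul f h := by
  have := zmul_add_right f (g - h) h
  rw [sub_add_cancel] at this
  rw [this]; abel

lemma pMap_single (w : Word X) (c : K) :
    pMap (Finsupp.single w c) =
      c • (if w.1.length = 1 then -(Finsupp.single w (1 : K)) else ofList (swapLast w.1)) := by
  unfold pMap
  rw [Finsupp.sum_single_index]
  simp

lemma pMap_add (f g : Zin K X) : pMap (f + g) = pMap f + pMap g := by
  unfold pMap
  rw [Finsupp.sum_add_index']
  · intro a; simp
  · intro a b₁ b₂
    split <;> simp [add_smul, Finsupp.single_add] <;> abel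

lemma bar_add (f g : Zin K X) : bar (f + g) = bar f + bar g := by
  unfold bar; rw [pMap_add]; abel

lemma bar_sub (f g : Zin K X) : bar (f - g) = bar f - bar g := by
  have := bar_add (f - g) g
  rw [sub_add_cancel] at this
  rw [this]; abel

lemma bar_zero : bar (0 : Zin K X) = 0 := by
  simp [bar, pMap]

end Lemmas

section Lemmas2
variable {K X : Type} [Field K]

lemma shuffles_length {X : Type} : ∀ (l₁ l₂ : List X), ∀ s ∈ shuffles l₁ l₂,
    s.length = l₁.length + l₂.length := by
  intro l₁ l₂
  induction l₁, l₂ using shuffles.induct with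
  | case1 l => simp [shuffles]
  | case2 a as => simp [shuffles]
  | case3 a as b bs ih1 ih2 =>
    intro s hs
    rw [shuffles] at hs
    simp only [List.mem_append, List.mem_map] at hs
    rcases hs with ⟨w, hw, rfl⟩ | ⟨w, hw, rfl⟩
    · simp [ih1 w hw]; omega
    · simp [ih2 w hw]; omega

lemma shuffles_single_append {X : Type} (c y : X) : ∀ (u : List X),
    shuffles [c] (u ++ [y]) = ((shuffles [c] u).map (· ++ [y])) ++ [u ++ [y, c]] := by
  intro u
  induction u with
  | nil => simp [shuffles]
  | cons b bs ih =>
    rw [List.cons_append, shuffles, ih]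
    simp [shuffles, List.map_map, Function.comp]

lemma swapLast_append {X : Type} (u : List X) (y z : X) :
    swapLast (u ++ [y, z]) = u ++ [z, y] := by
  have h : (u ++ [y, z]).reverse = z :: y :: u.reverse := by simp
  unfold swapLast
  rw [h]
  simp

end Lemmas2

section Lemmas3
variable {K X : Type} [Field K]

lemma ofList_ne_nil (w : List X) (h : w ≠ []) :
    ofList (K := K) w = Finsupp.single ⟨w, h⟩ 1 := by
  cases w with
  | nil => exact absurd rfl h
  | cons a t => rfl

lemma shuffles_nil_right {X : Type} (w : List X) (h : w ≠ []) : shuffles w [] = [w] := by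
  cases w with
  | nil => exact absurd rfl h
  | cons a t => simp [shuffles]

lemma ofLists_append (A B : List (List X)) :
    ofLists (K := K) (A ++ B) = ofLists A + ofLists B := by
  simp [ofLists]

lemma ofLists_cons (s : List X) (L : List (List X)) :
    ofLists (K := K) (s :: L) = ofList s + ofLists L := by
  simp [ofLists]

lemma ofLetter_eq (c : X) : ofLetter (K := K) c = ofList [c] := rfl

lemma zmul_ofList_letter (w : List X) (h : w ≠ []) (z : X) :
    zmul (ofList (K := K) w) (ofLetter z) = ofList (w ++ [z]) := by
  erw [ofList_ne_nil w h, ofLetter, zmul_single_single]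
  simp only [List.dropLast_singleton, List.getLast_singleton]
  rw [shuffles_nil_right w h]
  simp [ofLists]

lemma zmul_letter_ofList_concat (c : X) (v : List X) (z : X) :
    zmul (ofLetter (K := K) c) (ofList (v ++ [z])) =
      ofLists ((shuffles [c] v).map (· ++ [z])) := by
  erw [ofLetter, ofList_ne_nil (v ++ [z]) (by simp), zmul_single_single]
  simp [List.dropLast_concat, List.getLast_concat]

lemma zmul_ofLists_letter (L : List (List X)) (h : ∀ s ∈ L, s ≠ []) (z : X) :
    zmul (ofLists (K := K) L) (ofLetter z) = ofLists (L.map (· ++ [z])) := by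
  induction L with
  | nil => simp [ofLists, zmul_zero_left]
  | cons s t ih =>
    rw [ofLists_cons, zmul_add_left, zmul_ofList_letter s (h s (by simp)) z,
      List.map_cons, ofLists_cons, ih (fun a ha => h a (by simp [ha]))]

lemma bar_ofList_big (l : List X) (h2 : 2 ≤ l.length) :
    bar (ofList (K := K) l) = ofList l - ofList (swapLast l) := by
  have h : l ≠ [] := by intro e; rw [e] at h2; simp at h2
  erw [bar, ofList_ne_nil l h, pMap_single]
  rw [if_neg (by simp; omega)]
  simp [ofList_ne_nil l h]

lemma bar_ofLists (L : List (List X)) (h : ∀ s ∈ L, 2 ≤ s.length) :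
    bar (ofLists (K := K) L) = ofLists L - ofLists (L.map swapLast) := by
  induction L with
  | nil => simp [ofLists, bar_zero]
  | cons s t ih =>
    rw [ofLists_cons, bar_add, bar_ofList_big s (h s (by simp)),
      List.map_cons, ofLists_cons]
    rw [ih (fun a ha => h a (by simp [ha]))]
    abel

lemma shMul_letter_ofList (c : X) (u : List X) (h : u ≠ []) :
    shMul (ofLetter (K := K) c) (ofList u) = ofLists (shuffles [c] u) := by
  rw [ofLetter, ofList_ne_nil u h]
  unfold shMul
  erw [Finsupp.sum_single_index]
  · erw [Finsupp.sum_single_index]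
    · simp
    · simp
  · simp

end Lemmas3

section Helper
variable {K X : Type} [Field K]

lemma swapLast3 {X : Type} (u : List X) (x₁ x₂ x₃ : X) :
    swapLast (u ++ [x₁, x₂, x₃]) = u ++ [x₁, x₃, x₂] := by
  have := swapLast_append (u ++ [x₁]) x₂ x₃
  simpa using this

lemma zmul_letter_pair (c x y : X) :
    zmul (ofLetter (K := K) c) (ofList [x, y]) = ofList [c, x, y] + ofList [x, c, y] := by
  have h := zmul_letter_ofList_concat (K := K) c [x] y
  simp only [List.singleton_append] at h
  rw [h]
  simp [shuffles, ofLists]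

end Helper


/-- Bracketing a skew-right-commutative element with a letter:
for `m = 2`, `[\bar{ab}, c] = \bar{abc} − \bar{bac} − \bar{cab}`; for `m > 2`,
`[\bar{u y z}, c] = \bar{u y z c} − \bar{u z y c} − \bar{(c ⧢ u) y z}`. -/
theorem bracket_skew_with_letter (K X : Type) [Field K] [CharZero K] :
    (∀ a b c : X,
      zbracket (bar (ofList (K := K) [a, b])) (ofLetter c) =
        bar (ofList [a, b, c]) - bar (ofList [b, a, c]) - bar (ofList [c, a, b])) ∧
    (∀ u : List X, u ≠ [] → ∀ y z c : X,
      zbracket (bar (ofList (K := K) (u ++ [y, z]))) (ofLetter c) =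
        bar (ofList (u ++ [y, z, c])) - bar (ofList (u ++ [z, y, c])) -
          bar (zmul (zmul (shMul (ofList [c]) (ofList u)) (ofList [y])) (ofList [z]))) := by
  constructor
  · intro a b c
    have hab : bar (ofList (K := K) [a, b]) = ofList [a, b] - ofList [b, a] := by
      rw [bar_ofList_big _ (by simp)]
      have := swapLast_append ([] : List X) a b
      simp only [List.nil_append] at this
      rw [this]
    rw [zbracket, hab, zmul_sub_left, zmul_sub_right,
      zmul_ofList_letter [a, b] (by simp) c, zmul_ofList_letter [b, a] (by simp) c,
      zmul_letter_pair, zmul_letter_pair]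
    have s1 := swapLast3 ([] : List X) a b c
    have s2 := swapLast3 ([] : List X) b a c
    have s3 := swapLast3 ([] : List X) c a b
    simp only [List.nil_append] at s1 s2 s3
    rw [bar_ofList_big [a,b,c] (by simp), bar_ofList_big [b,a,c] (by simp),
      bar_ofList_big [c,a,b] (by simp), s1, s2, s3]
    simp only [List.cons_append, List.nil_append]
    abel
  · intro u hu y z c
    have hne : ∀ s ∈ shuffles [c] u, s ≠ [] := by
      intro s hs e
      have := shuffles_length [c] u s hs
      rw [e] at this
      simp at this
      omega
    have hne2 : ∀ s ∈ (shuffles [c] u).map (fun s => s ++ [y]), s ≠ [] := by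
      intro s hs
      simp only [List.mem_map] at hs
      obtain ⟨w, hw, rfl⟩ := hs
      simp
    have hlen2 : ∀ s ∈ (shuffles [c] u).map (fun s => s ++ [y, z]), 2 ≤ s.length := by
      intro s hs
      simp only [List.mem_map] at hs
      obtain ⟨w, hw, rfl⟩ := hs
      simp
    have e1 : zmul (ofLetter (K := K) c) (ofList (u ++ [y, z])) =
        ofLists ((shuffles [c] u).map (fun s => s ++ [y, z])) + ofList (u ++ [y, c, z]) := by
      have h := zmul_letter_ofList_concat (K := K) c (u ++ [y]) z
      rw [shuffles_single_append, List.map_append, List.map_map, ofLists_append] at h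
      simp only [Function.comp_def, List.append_assoc, List.cons_append, List.nil_append,
        List.singleton_append, List.map_cons, List.map_nil] at h ⊢
      simpa [ofLists] using h
    have e2 : zmul (ofLetter (K := K) c) (ofList (u ++ [z, y])) =
        ofLists ((shuffles [c] u).map (fun s => s ++ [z, y])) + ofList (u ++ [z, c, y]) := by
      have h := zmul_letter_ofList_concat (K := K) c (u ++ [z]) y
      rw [shuffles_single_append, List.map_append, List.map_map, ofLists_append] at h
      simp only [Function.comp_def, List.append_assoc, List.cons_append, List.nil_append,
        List.singleton_append, List.map_cons, List.map_nil] at h ⊢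
      simpa [ofLists] using h
    have e3 : zmul (zmul (shMul (ofList (K := K) [c]) (ofList u)) (ofList [y])) (ofList [z]) =
        ofLists ((shuffles [c] u).map (fun s => s ++ [y, z])) := by
      simp only [← ofLetter_eq]
      rw [shMul_letter_ofList c u hu, zmul_ofLists_letter _ hne y,
        zmul_ofLists_letter _ hne2 z, List.map_map]
      simp only [Function.comp_def, List.append_assoc, List.cons_append, List.nil_append,
        List.singleton_append]
    have b3 : bar (ofLists (K := K) ((shuffles [c] u).map (fun s => s ++ [y, z]))) =
        ofLists ((shuffles [c] u).map (fun s => s ++ [y, z])) -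
          ofLists ((shuffles [c] u).map (fun s => s ++ [z, y])) := by
      rw [bar_ofLists _ hlen2, List.map_map]
      simp only [Function.comp_def, swapLast_append]
    rw [zbracket, bar_ofList_big (u ++ [y, z]) (by simp), swapLast_append,
      zmul_sub_left, zmul_sub_right,
      zmul_ofList_letter _ (by simp) c, zmul_ofList_letter _ (by simp) c,
      e1, e2, e3, b3,
      bar_ofList_big (u ++ [y, z, c]) (by simp), bar_ofList_big (u ++ [z, y, c]) (by simp),
      swapLast3, swapLast3]
    simp only [List.append_assoc, List.cons_append, List.nil_append]
    abel
end
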